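/- Let L : C ⇄ D : N be an adjunction, and suppose W_C and W_D are classes of morphisms in C and D such that N sends W_D into W_C and reflects them on objects in the image, and the unit η_X : X → N L X lies in W_C for every X in C. If N is fully faithful, then the induced functors on localizations C[W_C⁻¹] and D[W_D⁻¹] are equivalences, provided N(W_D) ⊆ W_C and L(W_C) ⊆ W_D. -/

import Mathlib

/-!
The unit is a weak equivalence by hypothesis, and the counit is an isomorphism because `N` is
fully faithful; so both become isomorphisms in the localizations, where they exhibit the functors
induced by `L` and `N` as mutually inverse equivalences.
-/

open CategoryTheory
universe v₁ v₂ u₁ u₂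

namespace CategoryTheory.Adjunction

variable {C₁ C₂ D₁ D₂ : Type*} [Category* C₁] [Category* C₂] [Category* D₁] [Category* D₂]
  {G : C₁ ⥤ C₂} {F : C₂ ⥤ C₁} (adj : G ⊣ F)
  (L₁ : C₁ ⥤ D₁) (W₁ : MorphismProperty C₁) [L₁.IsLocalization W₁]
  (L₂ : C₂ ⥤ D₂) (W₂ : MorphismProperty C₂) [L₂.IsLocalization W₂]
  (G' : D₁ ⥤ D₂) (F' : D₂ ⥤ D₁)
  [Localization.Lifting L₁ W₁ (G ⋙ L₂) G'] [Localization.Lifting L₂ W₂ (F ⋙ L₁) F']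

noncomputable def localizedUnitIso [IsIso (Functor.whiskerRight adj.unit L₁)] :
    (G ⋙ L₂) ⋙ F' ≅ L₁ :=
  Functor.isoWhiskerLeft G (Localization.Lifting.iso L₂ W₂ (F ⋙ L₁) F') ≪≫
    (Functor.associator G F L₁).symm ≪≫
    (asIso (Functor.whiskerRight adj.unit L₁)).symm ≪≫ L₁.leftUnitor

noncomputable def localizedCounitIso [IsIso (Functor.whiskerRight adj.counit L₂)] :
    (F ⋙ L₁) ⋙ G' ≅ L₂ :=
  Functor.isoWhiskerLeft F (Localization.Lifting.iso L₁ W₁ (G ⋙ L₂) G') ≪≫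
    (Functor.associator F G L₂).symm ≪≫
    asIso (Functor.whiskerRight adj.counit L₂) ≪≫ L₂.leftUnitor

noncomputable def localizedEquivalence [IsIso (Functor.whiskerRight adj.unit L₁)]
    [IsIso (Functor.whiskerRight adj.counit L₂)] : D₁ ≌ D₂ :=
  Localization.equivalence L₁ W₁ L₂ W₂ (G ⋙ L₂) G' (F ⋙ L₁) F'
    (adj.localizedUnitIso L₁ L₂ W₂ F') (adj.localizedCounitIso L₁ W₁ L₂ G')

end CategoryTheory.Adjunction

theorem localized_adjunction_equivalence_general
    {C : Type u₁} [Category.{v₁} C] {D : Type u₂} [Category.{v₂} D]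
    (L : C ⥤ D) (N : D ⥤ C) (adj : L ⊣ N) [N.Full] [N.Faithful]
    (WC : MorphismProperty C) (WD : MorphismProperty D)
    (hL : ∀ ⦃X Y : C⦄ (f : X ⟶ Y), WC f → WD (L.map f))
    (hN : ∀ ⦃X Y : D⦄ (f : X ⟶ Y), WD f → WC (N.map f))
    (hunit : ∀ X : C, WC (adj.unit.app X)) :
    ∃ (h₁ : WC.IsInvertedBy (L ⋙ WD.Q)) (h₂ : WD.IsInvertedBy (N ⋙ WC.Q)),
      (Localization.lift (L ⋙ WD.Q) h₁ WC.Q).IsEquivalence ∧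
      (Localization.lift (N ⋙ WC.Q) h₂ WD.Q).IsEquivalence := by
  have h₁ : WC.IsInvertedBy (L ⋙ WD.Q) := fun _ _ f hf =>
    Localization.inverts WD.Q WD _ (hL f hf)
  have h₂ : WD.IsInvertedBy (N ⋙ WC.Q) := fun _ _ f hf =>
    Localization.inverts WC.Q WC _ (hN f hf)
  have : ∀ X, IsIso ((Functor.whiskerRight adj.unit WC.Q).app X) := fun X =>
    Localization.inverts WC.Q WC _ (hunit X)
  have : IsIso (Functor.whiskerRight adj.unit WC.Q) := NatIso.isIso_of_isIso_app _
  let e := adj.localizedEquivalence WC.Q WC WD.Q WD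
    (Localization.lift (L ⋙ WD.Q) h₁ WC.Q) (Localization.lift (N ⋙ WC.Q) h₂ WD.Q)
  exact ⟨h₁, h₂, e.isEquivalence_functor, e.isEquivalence_inverse⟩

/-- Let `L ⊣ N` be an adjunction, `W_C`, `W_D` classes of weak equivalences satisfying
two-out-of-three, with `L(W_C) ⊆ W_D`, `N(W_D) ⊆ W_C`, all unit maps in `W_C`, and `N`
fully faithful.  Then the functors induced by `L` and `N` on the localizations
`C[W_C⁻¹]` and `D[W_D⁻¹]` are equivalences. -/
theorem localized_adjunction_equivalence
    {C : Type u₁} [Category.{v₁} C] {D : Type u₂} [Category.{v₂} D]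
    (L : C ⥤ D) (N : D ⥤ C) (adj : L ⊣ N) [N.Full] [N.Faithful]
    (WC : MorphismProperty C) (WD : MorphismProperty D)
    [WC.HasTwoOutOfThreeProperty] [WD.HasTwoOutOfThreeProperty]
    (hL : ∀ ⦃X Y : C⦄ (f : X ⟶ Y), WC f → WD (L.map f))
    (hN : ∀ ⦃X Y : D⦄ (f : X ⟶ Y), WD f → WC (N.map f))
    (hunit : ∀ X : C, WC (adj.unit.app X)) :
    ∃ (h₁ : WC.IsInvertedBy (L ⋙ WD.Q)) (h₂ : WD.IsInvertedBy (N ⋙ WC.Q)),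
      (Localization.lift (L ⋙ WD.Q) h₁ WC.Q).IsEquivalence ∧
      (Localization.lift (N ⋙ WC.Q) h₂ WD.Q).IsEquivalence :=
  localized_adjunction_equivalence_general L N adj WC WD hL hN hunit
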